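/- If H is obtained from a simple graph G by contracting an edge {x,y}, and {p,q,r} is an asteroidal triple in H, then any path between p and q in H − N_H[r] lifts to a path between p and q in G avoiding N_G[r] (when r is not the contracted vertex) or avoiding both N_G[x] and N_G[y] (when r is the contracted vertex). -/

import Mathlib

open SimpleGraph

/-- The closed neighborhood of a vertex. -/
def closedNbh {V : Type*} (G : SimpleGraph V) (v : V) : Set V :=
  insert v (G.neighborSet v)

/-- `u` and `w` are joined by a walk all of whose vertices avoid the set `A`. -/
def reachAvoid {V : Type*} (G : SimpleGraph V) (A : Set V) (u w : V) : Prop :=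
  ∃ p : G.Walk u w, ∀ x ∈ p.support, x ∉ A

/-- `{p, q, r}` is an asteroidal triple: three pairwise nonadjacent (distinct) vertices
such that every two of them are joined by a path avoiding the closed neighborhood
of the third. -/
def IsAT {V : Type*} (G : SimpleGraph V) (p q r : V) : Prop :=
  p ≠ q ∧ p ≠ r ∧ q ≠ r ∧ ¬ G.Adj p q ∧ ¬ G.Adj p r ∧ ¬ G.Adj q r ∧
  reachAvoid G (closedNbh G r) p q ∧ reachAvoid G (closedNbh G q) p r ∧
  reachAvoid G (closedNbh G p) q r

/-- `C` is a block at `v`: a connected component of `G − N[v]`. -/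
def IsBlockAt {V : Type*} (G : SimpleGraph V) (v : V) (C : Set V) : Prop :=
  C.Nonempty ∧ C ⊆ (closedNbh G v)ᶜ ∧ (G.induce C).Connected ∧
  ∀ u ∉ C, u ∉ closedNbh G v → ∀ c ∈ C, ¬ G.Adj u c

/-- `z` is between the nonadjacent vertices `x` and `y`: `z` and `x` lie in a common
component of `G − N[y]`, and `z` and `y` lie in a common component of `G − N[x]`. -/
def Between {V : Type*} (G : SimpleGraph V) (x y z : V) : Prop :=
  reachAvoid G (closedNbh G y) x z ∧ reachAvoid G (closedNbh G x) y z

/-- The interval between `x` and `y`: all vertices between `x` and `y`. -/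
def interval {V : Type*} (G : SimpleGraph V) (x y : V) : Set V :=
  {z | Between G x y z}

/-- The contraction of the edge `{x, y}` of `G`: the vertices `x` and `y` are
replaced by a single new vertex `none`, whose neighborhood is
`(N(x) ∪ N(y)) \ {x, y}`. -/
def contractEdge {V : Type*} (G : SimpleGraph V) (x y : V) :
    SimpleGraph (Option {v : V // v ≠ x ∧ v ≠ y}) where
  Adj a b :=
    match a, b with
    | some u, some w => G.Adj u.1 w.1
    | some u, none => G.Adj u.1 x ∨ G.Adj u.1 y
    | none, some w => G.Adj w.1 x ∨ G.Adj w.1 y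
    | none, none => False
  symm := ⟨by
    rintro (_ | a) (_ | b) h <;> simp_all [SimpleGraph.adj_comm]⟩
  loopless := ⟨by
    rintro (_ | a) h <;> simp_all⟩

/-- The vertex `v` of `G` corresponds to the vertex `a` of the contracted graph:
either `a` is the copy of `v`, or `a` is the contracted vertex and `v ∈ {x, y}`. -/
def corr {V : Type*} (x y : V) (v : V) (a : Option {u : V // u ≠ x ∧ u ≠ y}) : Prop :=
  (∃ h : v ≠ x ∧ v ≠ y, a = some ⟨v, h⟩) ∨ (a = none ∧ (v = x ∨ v = y))

/- Send every vertex of `G` to its vertex in the contraction (`x` and `y` to the contracted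
vertex). This map sends closed neighborhoods into closed neighborhoods, and each edge of the
contraction is traced in `G` by a path of length at most two through preimages of its ends (through
the edge `xy` when the contracted vertex is entered at `y`). So a walk of the contraction lifts to
a walk of `G` all of whose vertices map onto the walk, and if the walk avoids `N[r]`, the lift
avoids `N[v]` for every preimage `v` of `r`. -/

section ContractEdge

variable {V : Type*} {G : SimpleGraph V} {x y : V}

def liftVertex (x y : V) (a : Option {u : V // u ≠ x ∧ u ≠ y}) : V :=
  a.elim x Subtype.val

lemma corr_some (u : {u : V // u ≠ x ∧ u ≠ y}) : corr x y u.1 (some u) :=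
  Or.inl ⟨u.2, rfl⟩

lemma corr_left_none : corr x y x none :=
  Or.inr ⟨rfl, Or.inl rfl⟩

lemma corr_right_none : corr x y y none :=
  Or.inr ⟨rfl, Or.inr rfl⟩

lemma corr_liftVertex (a : Option {u : V // u ≠ x ∧ u ≠ y}) :
    corr x y (liftVertex x y a) a := by
  cases a with
  | none => exact corr_left_none
  | some u => exact corr_some u

lemma corr_unique {v : V} {a c : Option {u : V // u ≠ x ∧ u ≠ y}}
    (ha : corr x y v a) (hc : corr x y v c) : a = c := by
  rcases ha with ⟨hv, rfl⟩ | ⟨rfl, hv⟩ <;> rcases hc with ⟨hv', rfl⟩ | ⟨rfl, hv'⟩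
  · rfl
  · rcases hv' with rfl | rfl
    exacts [absurd rfl hv.1, absurd rfl hv.2]
  · rcases hv with rfl | rfl
    exacts [absurd rfl hv'.1, absurd rfl hv'.2]
  · rfl

lemma mem_closedNbh_contractEdge_of_corr {u v : V} {a c : Option {u : V // u ≠ x ∧ u ≠ y}}
    (hu : corr x y u a) (hv : corr x y v c) (h : v ∈ closedNbh G u) :
    c ∈ closedNbh (contractEdge G x y) a := by
  rcases h with rfl | huv
  · exact corr_unique hv hu ▸ Set.mem_insert _ _
  rw [mem_neighborSet] at huv
  rcases hu with ⟨hu, rfl⟩ | ⟨rfl, hu⟩ <;> rcases hv with ⟨hv, rfl⟩ | ⟨rfl, hv⟩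
  · exact Or.inr huv
  · exact Or.inr (by rcases hv with rfl | rfl <;> simp [contractEdge, huv])
  · exact Or.inr (by rcases hu with rfl | rfl <;> simp [contractEdge, huv.symm])
  · exact Set.mem_insert _ _

lemma exists_walk_of_adj_contractEdge_none (hxy : G.Adj x y) {u : {u : V // u ≠ x ∧ u ≠ y}}
    (h : (contractEdge G x y).Adj (some u) none) :
    ∃ p : G.Walk u.1 x, ∀ v ∈ p.support, corr x y v (some u) ∨ corr x y v none := by
  rcases (h : G.Adj u.1 x ∨ G.Adj u.1 y) with hux | huy
  · refine ⟨.cons hux .nil, fun v hv => ?_⟩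
    rcases List.mem_pair.mp hv with rfl | rfl
    exacts [Or.inl (corr_some u), Or.inr corr_left_none]
  · refine ⟨.cons huy (.cons hxy.symm .nil), fun v hv => ?_⟩
    simp only [Walk.support_cons, Walk.support_nil, List.mem_cons, List.not_mem_nil,
      or_false] at hv
    rcases hv with rfl | rfl | rfl
    exacts [Or.inl (corr_some u), Or.inr corr_right_none, Or.inr corr_left_none]

lemma exists_walk_of_adj_contractEdge (hxy : G.Adj x y)
    {a c : Option {u : V // u ≠ x ∧ u ≠ y}} (h : (contractEdge G x y).Adj a c) :
    ∃ p : G.Walk (liftVertex x y a) (liftVertex x y c),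
      ∀ v ∈ p.support, corr x y v a ∨ corr x y v c := by
  cases a with
  | some u =>
    cases c with
    | some w =>
      refine ⟨.cons (show G.Adj u.1 w.1 from h) .nil, fun v hv => ?_⟩
      rcases List.mem_pair.mp hv with rfl | rfl
      exacts [Or.inl (corr_some u), Or.inr (corr_some w)]
    | none => exact exists_walk_of_adj_contractEdge_none hxy h
  | none =>
    cases c with
    | some w =>
      obtain ⟨p, hp⟩ := exists_walk_of_adj_contractEdge_none hxy h.symm
      refine ⟨p.reverse, fun v hv => (hp v ?_).symm⟩
      rw [← List.mem_reverse, ← Walk.support_reverse]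
      exact hv
    | none => exact absurd rfl h.ne

theorem exists_walk_lift_contractEdge (hxy : G.Adj x y)
    {a b : Option {u : V // u ≠ x ∧ u ≠ y}} (w : (contractEdge G x y).Walk a b) :
    ∃ p : G.Walk (liftVertex x y a) (liftVertex x y b),
      ∀ v ∈ p.support, ∃ c ∈ w.support, corr x y v c := by
  induction w with
  | nil =>
    refine ⟨.nil, fun v hv => ⟨_, Walk.start_mem_support _, ?_⟩⟩
    rw [Walk.support_nil, List.mem_singleton] at hv
    rw [hv]
    exact corr_liftVertex _
  | @cons a c b h w ih =>
    obtain ⟨p₀, hp₀⟩ := exists_walk_of_adj_contractEdge hxy h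
    obtain ⟨p, hp⟩ := ih
    refine ⟨p₀.append p, fun v hv => ?_⟩
    rcases (Walk.mem_support_append_iff _ _).mp hv with hv | hv
    · rcases hp₀ v hv with hva | hvc
      · exact ⟨a, Walk.start_mem_support _, hva⟩
      · exact ⟨c, by simp, hvc⟩
    · obtain ⟨d, hd, hvd⟩ := hp v hv
      exact ⟨d, by simp [hd], hvd⟩

end ContractEdge

theorem stmt2_general {V : Type*} (G : SimpleGraph V) (x y : V) (hxy : G.Adj x y)
    (p q r : Option {u : V // u ≠ x ∧ u ≠ y})
    (w : (contractEdge G x y).Walk p q)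
    (hw : ∀ a ∈ w.support, a ∉ closedNbh (contractEdge G x y) r) :
    (∀ r' : {u : V // u ≠ x ∧ u ≠ y}, r = some r' →
      ∃ u v : V, corr x y u p ∧ corr x y v q ∧
        reachAvoid G (closedNbh G r'.1) u v) ∧
    (r = none →
      ∃ (p' q' : {u : V // u ≠ x ∧ u ≠ y}), p = some p' ∧ q = some q' ∧
        reachAvoid G (closedNbh G x ∪ closedNbh G y) p'.1 q'.1) := by
  obtain ⟨pw, hpw⟩ := exists_walk_lift_contractEdge hxy w
  have avoid : ∀ u, corr x y u r → ∀ v ∈ pw.support, v ∉ closedNbh G u := by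
    intro u hu v hv hvu
    obtain ⟨c, hc, hvc⟩ := hpw v hv
    exact hw c hc (mem_closedNbh_contractEdge_of_corr hu hvc hvu)
  refine ⟨?_, ?_⟩
  · rintro r' rfl
    exact ⟨_, _, corr_liftVertex p, corr_liftVertex q, pw, avoid r'.1 (corr_some r')⟩
  · rintro rfl
    have not_none : ∀ a ∈ w.support, ∃ a', a = some a' := fun a ha => by
      cases a with
      | none => exact absurd (Set.mem_insert _ _) (hw _ ha)
      | some a' => exact ⟨a', rfl⟩
    obtain ⟨p', rfl⟩ := not_none p w.start_mem_support
    obtain ⟨q', rfl⟩ := not_none q w.end_mem_support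
    refine ⟨p', q', rfl, rfl, pw, fun v hv hvxy => ?_⟩
    rcases hvxy with hvx | hvy
    exacts [avoid x corr_left_none v hv hvx, avoid y corr_right_none v hv hvy]

/-- paths of the contracted graph avoiding a closed neighborhood lift
back to paths of `G` avoiding the corresponding closed neighborhood(s). -/
theorem stmt2 {V : Type*} (G : SimpleGraph V) (x y : V) (hxy : G.Adj x y)
    (p q r : Option {u : V // u ≠ x ∧ u ≠ y})
    (hAT : IsAT (contractEdge G x y) p q r)
    (w : (contractEdge G x y).Walk p q)
    (hw : ∀ a ∈ w.support, a ∉ closedNbh (contractEdge G x y) r) :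
    (∀ r' : {u : V // u ≠ x ∧ u ≠ y}, r = some r' →
      ∃ u v : V, corr x y u p ∧ corr x y v q ∧
        reachAvoid G (closedNbh G r'.1) u v) ∧
    (r = none →
      ∃ (p' q' : {u : V // u ≠ x ∧ u ≠ y}), p = some p' ∧ q = some q' ∧
        reachAvoid G (closedNbh G x ∪ closedNbh G y) p'.1 q'.1) :=
  stmt2_general G x y hxy p q r w hw
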